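/- Let R be a commutative ring. For finite rooted directed acyclic multigraphs G₁ and G₂ whose marked root vertices are sources, and for a sink vertex v of G₁ (a vertex that is the source of no edge), let G₁ ⊲_v G₂ denote the rooted directed acyclic multigraph obtained from the disjoint union of G₁ and G₂ by identifying the root of G₂ with v, rooted at the root of G₁. Then on the free R-module spanned by isomorphism classes of finite rooted directed acyclic multigraphs with source root, the operator G₁ ⊲ G₂ := Σ_{v a sink of G₁} [G₁ ⊲_v G₂], extended bilinearly, is well defined and satisfies the right pre-Lie identity. -/

import Mathlib

open scoped Classical

noncomputable section

/-- A finite rooted directed multigraph: finite vertex and edge types together with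
source and target maps, and a marked root vertex. -/
structure RootedMultigraph : Type 1 where
  V : Type
  E : Type
  [fintV : Fintype V]
  [fintE : Fintype E]
  src : E → V
  tgt : E → V
  root : V

attribute [instance] RootedMultigraph.fintV RootedMultigraph.fintE

namespace RootedMultigraph

/-- A graph is acyclic if it contains no directed cycle. -/
def Acyclic (G : RootedMultigraph) : Prop :=
  ¬ ∃ (n : ℕ) (e : Fin (n + 1) → G.E), ∀ i, G.tgt (e i) = G.src (e (i + 1))

/-- The root vertex is a source: no edge has it as target. -/
def RootIsSource (G : RootedMultigraph) : Prop := ∀ e : G.E, G.tgt e ≠ G.root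

/-- A rooted directed acyclic multigraph with source root. -/
def Good (G : RootedMultigraph) : Prop := G.Acyclic ∧ G.RootIsSource

/-- `G₁ ⊲_v G₂`: the graph obtained from the disjoint union of `G₁` and `G₂` by
identifying the root of `G₂` with the vertex `v` of `G₁`, rooted at the root of `G₁`. -/
def glue (G₁ : RootedMultigraph) (v : G₁.V) (G₂ : RootedMultigraph) : RootedMultigraph where
  V := G₁.V ⊕ {w : G₂.V // w ≠ G₂.root}
  E := G₁.E ⊕ G₂.E
  src := Sum.elim (fun e => Sum.inl (G₁.src e))
    (fun e => if h : G₂.src e = G₂.root then Sum.inl v else Sum.inr ⟨G₂.src e, h⟩)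
  tgt := Sum.elim (fun e => Sum.inl (G₁.tgt e))
    (fun e => if h : G₂.tgt e = G₂.root then Sum.inl v else Sum.inr ⟨G₂.tgt e, h⟩)
  root := Sum.inl G₁.root

/-- Isomorphism of rooted multigraphs. -/
def Iso (G G' : RootedMultigraph) : Prop :=
  ∃ (eV : G.V ≃ G'.V) (eE : G.E ≃ G'.E),
    (∀ e, eV (G.src e) = G'.src (eE e)) ∧
    (∀ e, eV (G.tgt e) = G'.tgt (eE e)) ∧ eV G.root = G'.root

end RootedMultigraph

/-- Finite rooted directed acyclic multigraphs with source root. -/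
abbrev RootedDAG := {G : RootedMultigraph // G.Good}

def dagIsoRel : RootedDAG → RootedDAG → Prop := fun G G' => G.1.Iso G'.1

/-- Isomorphism classes of finite rooted directed acyclic multigraphs with source root. -/
abbrev DAGClass := Quot dagIsoRel

/-- The (right) pre-Lie identity for a bilinear map. -/
def IsPreLie {R M : Type*} [CommRing R] [AddCommGroup M] [Module R M]
    (t : M →ₗ[R] M →ₗ[R] M) : Prop :=
  ∀ x y z : M, t (t x y) z - t x (t y z) = t (t x z) y - t x (t z y)


/-- A sink: a vertex that is the source of no edge. -/
def RootedMultigraph.IsSink (G : RootedMultigraph) (v : G.V) : Prop :=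
  ∀ e : G.E, G.src e ≠ v

/-!
Grafting `B` at a sink `v` of `A` and then `C` at a sink of `A ⊲_v B` either grafts `C` at a sink
of `B` (the root of `B` counting as `v`), and these terms add up to exactly `A ⊲ (B ⊲ C)`, or
grafts `C` at a sink `u ≠ v` of `A`. Hence the associator `(A ⊲ B) ⊲ C - A ⊲ (B ⊲ C)` is the sum,
over ordered pairs of distinct sinks `(v, u)` of `A`, of `A` with `B` grafted at `v` and `C` at `u`,
which is symmetric in `B` and `C`.

Gluing preserves acyclicity because a directed cycle cannot leave `B` once it uses one of its
edges: the root of `B`, the only vertex shared with `A`, is a source of `B`.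
-/

open Fin.NatCast in
theorem Fin.forall_of_add_one_closed {n : ℕ} {p : Fin (n + 1) → Prop}
    (hstep : ∀ i, p i → p (i + 1)) {i₀ : Fin (n + 1)} (h₀ : p i₀) (i : Fin (n + 1)) : p i := by
  have hiter : ∀ k : ℕ, p (i₀ + k) := by
    intro k
    induction k with
    | zero => simpa using h₀
    | succ k ih => simpa [add_assoc] using hstep _ ih
  simpa using hiter (i - i₀).val

theorem isPreLie_of_basis {R M ι : Type*} [CommRing R] [AddCommGroup M] [Module R M]
    (b : Module.Basis ι R M) (t : M →ₗ[R] M →ₗ[R] M)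
    (h : ∀ i j k, t (t (b i) (b j)) (b k) - t (b i) (t (b j) (b k))
      = t (t (b i) (b k)) (b j) - t (b i) (t (b k) (b j))) :
    IsPreLie t := by
  let assoc : M →ₗ[R] M →ₗ[R] M →ₗ[R] M := t.compr₂ t - (LinearMap.llcomp R _ _ _).compl₁₂ t t
  have hsymm : assoc = LinearMap.lflip.comp assoc :=
    b.ext fun i => b.ext fun j => b.ext fun k => by simpa [assoc] using h i j k
  intro x y z
  simpa [assoc] using congr($hsymm x y z)

def Equiv.sumRightComm (α β γ : Type*) : (α ⊕ β) ⊕ γ ≃ (α ⊕ γ) ⊕ β :=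
  (Equiv.sumAssoc α β γ).trans
    (((Equiv.refl α).sumCongr (Equiv.sumComm β γ)).trans (Equiv.sumAssoc α γ β).symm)

def Equiv.sumAssocSubtypeNe {α β γ : Type*} (b₀ : β) :
    (α ⊕ {b // b ≠ b₀}) ⊕ γ ≃ α ⊕ {y : β ⊕ γ // y ≠ .inl b₀} where
  toFun
    | .inl (.inl a) => .inl a
    | .inl (.inr b) => .inr ⟨.inl b, fun h => b.2 (Sum.inl.inj h)⟩
    | .inr c => .inr ⟨.inr c, Sum.inr_ne_inl⟩
  invFun
    | .inl a => .inl (.inl a)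
    | .inr ⟨.inl b, h⟩ => .inl (.inr ⟨b, fun hb => h (congrArg Sum.inl hb)⟩)
    | .inr ⟨.inr c, _⟩ => .inr c
  left_inv := by rintro ((a | b) | c) <;> rfl
  right_inv := by rintro (a | ⟨b | c, h⟩) <;> rfl

namespace RootedMultigraph

variable {A A' B B' C : RootedMultigraph}

def glueInr (A : RootedMultigraph) (v : A.V) (B : RootedMultigraph) (w : B.V) : (A.glue v B).V :=
  if h : w = B.root then .inl v else .inr ⟨w, h⟩

@[simp] lemma glue_src_inl (v : A.V) (e : A.E) : (A.glue v B).src (.inl e) = .inl (A.src e) := rfl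
@[simp] lemma glue_tgt_inl (v : A.V) (e : A.E) : (A.glue v B).tgt (.inl e) = .inl (A.tgt e) := rfl
@[simp] lemma glue_src_inr (v : A.V) (e : B.E) :
    (A.glue v B).src (.inr e) = A.glueInr v B (B.src e) := rfl
@[simp] lemma glue_tgt_inr (v : A.V) (e : B.E) :
    (A.glue v B).tgt (.inr e) = A.glueInr v B (B.tgt e) := rfl
@[simp] lemma glue_root (v : A.V) : (A.glue v B).root = .inl A.root := rfl

/- `simp` does not see `(A.glue v B).V` as a sum type, so `Sum.inl.injEq` and friends do not fire
on equations at that type. -/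
@[simp] lemma glue_inl_inj {v u u' : A.V} : @Eq (A.glue v B).V (.inl u) (.inl u') ↔ u = u' :=
  Sum.inl_injective.eq_iff

@[simp] lemma glue_inr_inj {v : A.V} {w w' : {w : B.V // w ≠ B.root}} :
    @Eq (A.glue v B).V (.inr w) (.inr w') ↔ w = w' :=
  Sum.inr_injective.eq_iff

@[simp] lemma glueInr_root (v : A.V) : A.glueInr v B B.root = .inl v := dif_pos rfl

lemma glueInr_of_ne_root (v : A.V) {w : B.V} (hw : w ≠ B.root) :
    A.glueInr v B w = .inr ⟨w, hw⟩ := dif_neg hw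

@[simp] lemma glueInr_eq_inl_iff {v u : A.V} {w : B.V} :
    A.glueInr v B w = .inl u ↔ w = B.root ∧ v = u := by
  by_cases h : w = B.root <;> simp [glueInr, h]

@[simp] lemma glueInr_eq_inr_iff {v : A.V} {w : B.V} {w' : {w : B.V // w ≠ B.root}} :
    A.glueInr v B w = .inr w' ↔ w = w' := by
  by_cases h : w = B.root
  · subst h
    simpa using fun hw => w'.2 hw.symm
  · simp [glueInr, h, Subtype.ext_iff]

lemma RootIsSource.glue (hA : A.RootIsSource) (hB : B.RootIsSource) (v : A.V) :
    (A.glue v B).RootIsSource := by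
  rintro (e | e) h
  · exact hA e (Sum.inl.inj h)
  · exact hB e (glueInr_eq_inl_iff.mp h).1

lemma Acyclic.glue (hA : A.Acyclic) (hB : B.Acyclic) (hBr : B.RootIsSource) (v : A.V) :
    (A.glue v B).Acyclic := by
  rintro ⟨n, e, he⟩
  by_cases hright : ∃ i, ∃ b, e i = .inr b
  · have hstep : ∀ i, (∃ b, e i = .inr b) → ∃ b, e (i + 1) = .inr b := by
      rintro i ⟨b, hb⟩
      have hi := he i
      rw [hb, glue_tgt_inr, glueInr_of_ne_root v (hBr b)] at hi
      rcases h : e (i + 1) with a | b'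
      · simp [h] at hi
      · exact ⟨b', rfl⟩
    obtain ⟨i₀, hi₀⟩ := hright
    choose b hb using Fin.forall_of_add_one_closed hstep hi₀
    refine hB ⟨n, b, fun i => ?_⟩
    have hi := he i
    rw [hb, hb, glue_tgt_inr, glue_src_inr, glueInr_of_ne_root v (hBr _)] at hi
    exact (glueInr_eq_inr_iff.mp hi.symm).symm
  · have hleft : ∀ i, ∃ a, e i = .inl a := fun i => by
      rcases h : e i with a | b
      · exact ⟨a, rfl⟩
      · exact absurd ⟨i, b, h⟩ hright
    choose a ha using hleft
    refine hA ⟨n, a, fun i => ?_⟩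
    simpa [ha] using he i

lemma Good.glue (hA : A.Good) (hB : B.Good) (v : A.V) : (A.glue v B).Good :=
  ⟨hA.1.glue hB.1 hB.2 v, hA.2.glue hB.2 v⟩

lemma isSink_glue_inl {v u : A.V} :
    (A.glue v B).IsSink (.inl u) ↔ A.IsSink u ∧ (u = v → B.IsSink B.root) := by
  constructor
  · intro h
    refine ⟨fun e he => h (.inl e) (by simp [he]), ?_⟩
    rintro rfl e he
    exact h (.inr e) (by simp [he])
  · rintro ⟨hA, hB⟩ (e | e) he
    · exact hA e (by simpa using he)
    · obtain ⟨hroot, rfl⟩ := glueInr_eq_inl_iff.mp he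
      exact hB rfl e hroot

lemma isSink_glue_inr {v : A.V} {w : {w : B.V // w ≠ B.root}} :
    (A.glue v B).IsSink (.inr w) ↔ B.IsSink w := by
  constructor
  · intro h e he
    exact h (.inr e) (glueInr_eq_inr_iff.mpr he)
  · rintro h (e | e) he
    · simp at he
    · exact h e (glueInr_eq_inr_iff.mp he)

lemma isSink_glue_glueInr {v : A.V} (hv : A.IsSink v) {w : B.V} :
    (A.glue v B).IsSink (A.glueInr v B w) ↔ B.IsSink w := by
  by_cases hw : w = B.root
  · subst hw; simp [isSink_glue_inl, hv]
  · rw [glueInr_of_ne_root v hw, isSink_glue_inr]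

/-- The vertex `v` itself is a sink of `A.glue v B` exactly when the root of `B` is a sink of `B`,
so it is accounted for on the right. -/
def sinkGlueEquiv (A B : RootedMultigraph) (v : {v : A.V // A.IsSink v}) :
    {w // (A.glue v B).IsSink w} ≃ {u : {u // A.IsSink u} // u ≠ v} ⊕ {w // B.IsSink w} where
  toFun
    | ⟨.inl u, h⟩ =>
      if hu : u = v then .inr ⟨B.root, (isSink_glue_inl.mp h).2 hu⟩
      else .inl ⟨⟨u, (isSink_glue_inl.mp h).1⟩, fun h' => hu (congrArg Subtype.val h')⟩
    | ⟨.inr w, h⟩ => .inr ⟨w, isSink_glue_inr.mp h⟩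
  invFun
    | .inl u => ⟨.inl u.1, isSink_glue_inl.mpr ⟨u.1.2, fun h => absurd (Subtype.ext h) u.2⟩⟩
    | .inr w => ⟨A.glueInr v B w, (isSink_glue_glueInr v.2).mpr w.2⟩
  left_inv := by
    rintro ⟨u | w, h⟩
    · by_cases hu : u = v
      · subst hu; simp
      · simp [hu]
    · simp [glueInr_of_ne_root _ w.2]
  right_inv := by
    rintro (u | ⟨w, hw⟩)
    · simp [Subtype.val_injective.ne u.2]
    · by_cases hroot : w = B.root
      · subst hroot; simp
      · simp [glueInr_of_ne_root _ hroot]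

theorem sum_sinks_glue {M : Type*} [AddCommMonoid M] (v : {v : A.V // A.IsSink v})
    (f : (A.glue v B).V → M) :
    ∑ w : {w // (A.glue v B).IsSink w}, f w
      = ∑ u ∈ Finset.univ.erase v, f (.inl u) + ∑ w : {w // B.IsSink w}, f (A.glueInr v B w) := by
  rw [← (sinkGlueEquiv A B v).symm.sum_comp, Fintype.sum_sum_type,
    Finset.sum_subtype (p := (· ≠ v)) (Finset.univ.erase v) (by simp)]
  rfl

lemma isSink_map_iff (eV : A.V ≃ A'.V) (eE : A.E ≃ A'.E)
    (hs : ∀ e, eV (A.src e) = A'.src (eE e)) {u : A.V} : A'.IsSink (eV u) ↔ A.IsSink u := by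
  refine (eE.forall_congr fun e => ?_).symm
  rw [← hs, ne_eq, ne_eq, eV.apply_eq_iff_eq]

lemma iso_glue_left (eV : A.V ≃ A'.V) (eE : A.E ≃ A'.E)
    (hs : ∀ e, eV (A.src e) = A'.src (eE e)) (ht : ∀ e, eV (A.tgt e) = A'.tgt (eE e))
    (hr : eV A.root = A'.root) (v : A.V) :
    (A.glue v B).Iso (A'.glue (eV v) B) := by
  let eV' : A.V ⊕ {w // w ≠ B.root} ≃ A'.V ⊕ {w // w ≠ B.root} := eV.sumCongr (.refl _)
  have hinr : ∀ w, eV' (A.glueInr v B w) = A'.glueInr (eV v) B w := by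
    intro w
    by_cases hw : w = B.root
    · simp [eV', hw]
    · simp [eV', glueInr_of_ne_root _ hw]
  refine ⟨eV', eE.sumCongr (.refl _), ?_, ?_, congrArg Sum.inl hr⟩
  · rintro (e | e)
    · exact congrArg Sum.inl (hs e)
    · exact hinr _
  · rintro (e | e)
    · exact congrArg Sum.inl (ht e)
    · exact hinr _

lemma iso_glue_right (eV : B.V ≃ B'.V) (eE : B.E ≃ B'.E)
    (hs : ∀ e, eV (B.src e) = B'.src (eE e)) (ht : ∀ e, eV (B.tgt e) = B'.tgt (eE e))
    (hr : eV B.root = B'.root) (v : A.V) :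
    (A.glue v B).Iso (A.glue v B') := by
  have hroot : ∀ w, w ≠ B.root ↔ eV w ≠ B'.root := fun w => by
    rw [← hr, ne_eq, ne_eq, eV.apply_eq_iff_eq]
  let eV' : A.V ⊕ {w // w ≠ B.root} ≃ A.V ⊕ {w // w ≠ B'.root} :=
    (Equiv.refl _).sumCongr (eV.subtypeEquiv hroot)
  have hinr : ∀ w, eV' (A.glueInr v B w) = A.glueInr v B' (eV w) := by
    intro w
    by_cases hw : w = B.root
    · simp [eV', hw, hr]
    · simp [eV', glueInr_of_ne_root _ hw, glueInr_of_ne_root _ ((hroot w).mp hw)]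
  refine ⟨eV', (Equiv.refl _).sumCongr eE, ?_, ?_, rfl⟩
  · rintro (e | e)
    · rfl
    · exact (hinr _).trans (congrArg _ (hs e))
  · rintro (e | e)
    · rfl
    · exact (hinr _).trans (congrArg _ (ht e))

lemma iso_glue_glue_comm (v u : A.V) :
    ((A.glue v B).glue (.inl u) C).Iso ((A.glue u C).glue (.inl v) B) := by
  let eV := Equiv.sumRightComm A.V {w // w ≠ B.root} {w // w ≠ C.root}
  have hB : ∀ w, eV (.inl (A.glueInr v B w)) = (A.glue u C).glueInr (.inl v) B w := by
    intro w
    by_cases hw : w = B.root <;> simp [glueInr, hw] <;> rfl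
  have hC : ∀ w, eV ((A.glue v B).glueInr (.inl u) C w) = .inl (A.glueInr u C w) := by
    intro w
    by_cases hw : w = C.root <;> simp [glueInr, hw] <;> rfl
  refine ⟨eV, Equiv.sumRightComm A.E B.E C.E, ?_, ?_, rfl⟩
  · rintro ((e | e) | e); exacts [rfl, hB _, hC _]
  · rintro ((e | e) | e); exacts [rfl, hB _, hC _]

lemma iso_glue_glue_assoc (v : A.V) (u : B.V) :
    ((A.glue v B).glue (A.glueInr v B u) C).Iso (A.glue v (B.glue u C)) := by
  let eV := Equiv.sumAssocSubtypeNe (α := A.V) (γ := {w // w ≠ C.root}) B.root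
  have hB : ∀ w, eV (.inl (A.glueInr v B w)) = A.glueInr v (B.glue u C) (.inl w) := by
    intro w
    by_cases hw : w = B.root <;> simp [glueInr, hw] <;> rfl
  have hC : ∀ w, eV ((A.glue v B).glueInr (A.glueInr v B u) C w)
      = A.glueInr v (B.glue u C) (B.glueInr u C w) := by
    intro w
    by_cases hw : w = C.root
    · subst hw
      simp only [glueInr_root]
      exact hB u
    · simp [glueInr, hw]; rfl
  refine ⟨eV, Equiv.sumAssoc A.E B.E C.E, ?_, ?_, rfl⟩
  · rintro ((e | e) | e); exacts [rfl, hB _, hC _]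
  · rintro ((e | e) | e); exacts [rfl, hB _, hC _]

end RootedMultigraph

open RootedMultigraph

namespace RootedDAG

def glue (G₁ : RootedDAG) (v : G₁.1.V) (G₂ : RootedDAG) : RootedDAG :=
  ⟨G₁.1.glue v G₂.1, G₁.2.glue G₂.2 v⟩

variable (R : Type*) [CommRing R]

def basisVec (G : RootedDAG) : DAGClass →₀ R := Finsupp.single (Quot.mk dagIsoRel G) 1

variable {R}

lemma basisVec_eq_of_iso {G G' : RootedDAG} (h : G.1.Iso G'.1) : basisVec R G = basisVec R G' := by
  rw [basisVec, basisVec, Quot.sound (r := dagIsoRel) h]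

variable (R)

def insertion (G₁ G₂ : RootedDAG) : DAGClass →₀ R :=
  ∑ v : {v // G₁.1.IsSink v}, basisVec R (G₁.glue v G₂)

variable {R}

lemma insertion_eq_of_iso_left {G₁ G₁' : RootedDAG} (h : G₁.1.Iso G₁'.1) (G₂ : RootedDAG) :
    insertion R G₁ G₂ = insertion R G₁' G₂ := by
  obtain ⟨eV, eE, hs, ht, hr⟩ := h
  exact Fintype.sum_equiv (eV.subtypeEquiv fun _ => (isSink_map_iff eV eE hs).symm) _ _
    fun v => basisVec_eq_of_iso (iso_glue_left eV eE hs ht hr v)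

lemma insertion_eq_of_iso_right (G₁ : RootedDAG) {G₂ G₂' : RootedDAG} (h : G₂.1.Iso G₂'.1) :
    insertion R G₁ G₂ = insertion R G₁ G₂' := by
  obtain ⟨eV, eE, hs, ht, hr⟩ := h
  exact Fintype.sum_congr _ _ fun v => basisVec_eq_of_iso (iso_glue_right eV eE hs ht hr v.1)

variable (R)

def insertionOp : (DAGClass →₀ R) →ₗ[R] (DAGClass →₀ R) →ₗ[R] (DAGClass →₀ R) :=
  Finsupp.linearCombination R fun a => Finsupp.linearCombination R fun b =>
    Quot.lift₂ (insertion R) (fun G₁ _ _ => insertion_eq_of_iso_right G₁)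
      (fun _ _ G₂ h => insertion_eq_of_iso_left h G₂) a b

def doubleInsertion (A B C : RootedDAG) : DAGClass →₀ R :=
  ∑ v : {v // A.1.IsSink v}, ∑ u ∈ Finset.univ.erase v, basisVec R ((A.glue v B).glue (.inl u) C)

variable {R}

lemma insertionOp_basisVec (G₁ G₂ : RootedDAG) :
    insertionOp R (basisVec R G₁) (basisVec R G₂) = insertion R G₁ G₂ := by
  simp only [insertionOp, basisVec, Finsupp.linearCombination_single, one_smul]
  rfl

lemma insertionOp_assoc (A B C : RootedDAG) :
    insertionOp R (insertionOp R (basisVec R A) (basisVec R B)) (basisVec R C)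
      - insertionOp R (basisVec R A) (insertionOp R (basisVec R B) (basisVec R C))
    = doubleInsertion R A B C := by
  have hsplit : ∀ v : {v // A.1.IsSink v}, insertion R (A.glue v B) C
      = ∑ u ∈ Finset.univ.erase v, basisVec R ((A.glue v B).glue (.inl u) C)
        + ∑ w : {w // B.1.IsSink w}, basisVec R (A.glue v (B.glue w C)) := fun v =>
    (sum_sinks_glue v fun w => basisVec R ((A.glue v B).glue w C)).trans <| congrArg _ <|
      Fintype.sum_congr _ _ fun w => basisVec_eq_of_iso (iso_glue_glue_assoc v.1 w.1)
  rw [insertionOp_basisVec, insertionOp_basisVec, insertion, insertion, map_sum, map_sum,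
    LinearMap.sum_apply]
  simp only [insertionOp_basisVec, hsplit, Finset.sum_add_distrib]
  simp only [insertion]
  rw [Finset.sum_comm (s := Finset.univ) (t := Finset.univ)]
  exact add_sub_cancel_right _ _

lemma doubleInsertion_comm (A B C : RootedDAG) :
    doubleInsertion R A B C = doubleInsertion R A C B := by
  rw [doubleInsertion, Finset.sum_comm' (t' := Finset.univ) (s' := fun u => Finset.univ.erase u)
    (by simp [ne_comm])]
  exact Finset.sum_congr rfl fun u _ => Finset.sum_congr rfl fun v _ =>
    basisVec_eq_of_iso (iso_glue_glue_comm _ _)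

end RootedDAG

open RootedDAG in
/-- the insertion operator summing only over the sink vertices of `G₁`,
`G₁ ⊲ G₂ = Σ_{v a sink of G₁} [G₁ ⊲_v G₂]`, is well defined on the free `R`-module
spanned by isomorphism classes of finite rooted directed acyclic multigraphs with
source root, and satisfies the right pre-Lie identity. -/
theorem insertion_at_sinks_is_preLie (R : Type) [CommRing R] :
    ∃ ins : (DAGClass →₀ R) →ₗ[R] (DAGClass →₀ R) →ₗ[R] (DAGClass →₀ R),
      (∀ G₁ G₂ : RootedDAG,
        ∃ h : ∀ v : {v : G₁.1.V // G₁.1.IsSink v}, (G₁.1.glue v.1 G₂.1).Good,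
          ins (Finsupp.single (Quot.mk dagIsoRel G₁) 1)
              (Finsupp.single (Quot.mk dagIsoRel G₂) 1)
            = ∑ v : {v : G₁.1.V // G₁.1.IsSink v},
                Finsupp.single
                  (Quot.mk dagIsoRel (⟨G₁.1.glue v.1 G₂.1, h v⟩ : RootedDAG)) (1 : R)) ∧
      IsPreLie ins := by
  refine ⟨insertionOp R, fun G₁ G₂ => ⟨fun v => G₁.2.glue G₂.2 v.1, insertionOp_basisVec G₁ G₂⟩,
    isPreLie_of_basis Finsupp.basisSingleOne _ fun a b c => ?_⟩
  induction a using Quot.ind with | mk A => ?_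
  induction b using Quot.ind with | mk B => ?_
  induction c using Quot.ind with | mk C => ?_
  exact (insertionOp_assoc A B C).trans
    ((doubleInsertion_comm A B C).trans (insertionOp_assoc A C B).symm)
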